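/- Let d and n be positive natural numbers and let a_1, …, a_n be positive definite d×d complex matrices. Then lim_{p→∞} Tr((1/n) ∑_{k=1}^n a_k^{1/p})^p = Tr exp((1/n) ∑_{k=1}^n log a_k); that is, the tracial geometric mean of positive definite matrices is given by TG(a_1,…,a_n) = Tr exp((1/n) ∑_{k=1}^n log a_k). -/

import Mathlib

open scoped ComplexOrder
open scoped Matrix
open Filter NormedSpace Pointwise

/-- `A ^ r` for a matrix `A` and a real exponent `r`, via the continuous functional calculus
(for a positive semi-definite matrix this applies `t ↦ t ^ r` to the eigenvalues). -/
noncomputable def Matrix.cfcRpow {d : ℕ} (A : Matrix (Fin d) (Fin d) ℂ) (r : ℝ) :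
    Matrix (Fin d) (Fin d) ℂ :=
  cfc (fun t : ℝ => t ^ r) A

/-- `log A` for a (positive definite) matrix `A`, via the continuous functional calculus. -/
noncomputable def Matrix.cfcLog {d : ℕ} (A : Matrix (Fin d) (Fin d) ℂ) :
    Matrix (Fin d) (Fin d) ℂ :=
  cfc Real.log A

/-- The operator power mean `M_p(a_1, …, a_n) = ((1/n) ∑_{k=1}^n a_k^{1/p})^p`. -/
noncomputable def powerMean {d n : ℕ} (a : Fin n → Matrix (Fin d) (Fin d) ℂ) (p : ℝ) :
    Matrix (Fin d) (Fin d) ℂ :=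
  ((n : ℝ)⁻¹ • ∑ k : Fin n, (a k).cfcRpow p⁻¹).cfcRpow p

namespace TG

variable {d : ℕ}

attribute [local instance] Matrix.linftyOpSemiNormedRing Matrix.linftyOpNormedRing
  Matrix.linftyOpNormedAlgebra

lemma exp_unitary_conj (U : unitary (Matrix (Fin d) (Fin d) ℂ)) (A : Matrix (Fin d) (Fin d) ℂ) :
    exp ((U : Matrix (Fin d) (Fin d) ℂ) * A * star (U : Matrix (Fin d) (Fin d) ℂ))
      = (U : Matrix (Fin d) (Fin d) ℂ) * exp A * star (U : Matrix (Fin d) (Fin d) ℂ) := by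
  have h := exp_units_conj (Unitary.toUnits U) A
  simp [Unitary.toUnits] at h
  exact h

lemma exp_eq_cfc {A : Matrix (Fin d) (Fin d) ℂ} (hA : A.IsHermitian) :
    exp A = cfc Real.exp A := by
  rw [hA.cfc_eq, Matrix.IsHermitian.cfc]
  conv_lhs => rw [hA.spectral_theorem]
  simp only [Unitary.conjStarAlgAut_apply]
  rw [exp_unitary_conj, Matrix.exp_diagonal]
  have : exp ((RCLike.ofReal ∘ hA.eigenvalues : Fin d → ℂ)) =
      RCLike.ofReal ∘ Real.exp ∘ hA.eigenvalues := by
    funext i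
    rw [Pi.exp_def]
    simp [← Complex.exp_eq_exp_ℂ, ← Complex.ofReal_exp]
  rw [this]


lemma cfc_exp_mul (r : ℝ) {A : Matrix (Fin d) (Fin d) ℂ} (hA : A.IsHermitian) :
    cfc (fun t : ℝ => Real.exp (r * t)) A = exp (r • A) := by
  have hrA : (r • A).IsHermitian := by
    have : IsSelfAdjoint (r • A) := (IsSelfAdjoint.all r).smul (hA : IsSelfAdjoint A)
    exact this
  rw [exp_eq_cfc hrA]
  exact cfc_comp_const_mul r Real.exp A (by fun_prop) (hA : IsSelfAdjoint A)

lemma cfcRpow_eq_exp_smul_log {A : Matrix (Fin d) (Fin d) ℂ} (hA : A.IsHermitian)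
    (hpos : ∀ x ∈ spectrum ℝ A, 0 < x) (r : ℝ) :
    A.cfcRpow r = exp (r • A.cfcLog) := by
  rw [Matrix.cfcRpow, Matrix.cfcLog]
  have h1 : cfc (fun t : ℝ => t ^ r) A = cfc ((fun s => Real.exp (r * s)) ∘ Real.log) A := by
    apply cfc_congr
    intro x hx
    simp only [Function.comp_apply]
    rw [Real.rpow_def_of_pos (hpos x hx), mul_comm]
  have h2 := cfc_comp (fun s => Real.exp (r * s)) Real.log A (hA : IsSelfAdjoint A)
      (by fun_prop)
      (Real.continuousOn_log.mono (by intro x hx; simpa using (hpos x hx).ne'))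
  rw [h1, h2]
  exact cfc_exp_mul r (cfc_predicate Real.log A : IsSelfAdjoint _)

lemma spectrum_sub_one_bound (hd : 0 < d) {A : Matrix (Fin d) (Fin d) ℂ} {x : ℝ}
    (hx : x ∈ spectrum ℝ A) : |x - 1| ≤ ‖A - 1‖ := by
  haveI : Nonempty (Fin d) := ⟨⟨0, hd⟩⟩
  have h1 : x - 1 ∈ spectrum ℝ A - {(1 : ℝ)} := Set.sub_mem_sub hx rfl
  rw [spectrum.sub_singleton_eq] at h1
  have := spectrum.norm_le_norm_of_mem h1
  simpa using this


open scoped NNReal in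
lemma nnnorm_cfc_le {A : Matrix (Fin d) (Fin d) ℂ} (hA : A.IsHermitian) (f : ℝ → ℝ) (c : ℝ≥0)
    (h : ∀ x ∈ spectrum ℝ A, ‖f x‖₊ ≤ c) : ‖cfc f A‖₊ ≤ (d : ℝ≥0) * c * d := by
  rw [hA.cfc_eq, Matrix.IsHermitian.cfc]
  set U : Matrix (Fin d) (Fin d) ℂ := (hA.eigenvectorUnitary : Matrix (Fin d) (Fin d) ℂ) with hUdef
  have hU : ∀ i j, ‖U i j‖₊ ≤ 1 := by
    intro i j
    have hmem := hA.eigenvectorUnitary.2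
    rw [Matrix.mem_unitaryGroup_iff'] at hmem
    have h2 := congrArg (fun M => M j j) hmem
    simp only [Matrix.mul_apply, Matrix.one_apply_eq] at h2
    have h3 : ∀ k, star U j k * U k j = (Complex.normSq (U k j) : ℂ) := by
      intro k
      rw [Matrix.star_apply]
      exact Complex.normSq_eq_conj_mul_self.symm
    rw [Finset.sum_congr rfl (fun k _ => h3 k)] at h2
    rw [← Complex.ofReal_sum] at h2
    have h4 : ∑ k, Complex.normSq (U k j) = 1 := by exact_mod_cast h2
    have h5 : Complex.normSq (U i j) ≤ 1 := by
      rw [← h4]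
      exact Finset.single_le_sum (f := fun k => Complex.normSq (U k j))
        (fun k _ => Complex.normSq_nonneg _) (Finset.mem_univ i)
    rw [← NNReal.coe_le_coe]
    push_cast
    have h6 : ‖U i j‖ ^ 2 = Complex.normSq (U i j) := by
      rw [Complex.sq_norm]
    nlinarith [norm_nonneg (U i j)]
  have hUnorm : ∀ (B : Matrix (Fin d) (Fin d) ℂ), (∀ i j, ‖B i j‖₊ ≤ 1) → ‖B‖₊ ≤ d := by
    intro B hB
    rw [Matrix.linfty_opNNNorm_def]
    apply Finset.sup_le
    intro i _
    calc ∑ j, ‖B i j‖₊ ≤ ∑ _j : Fin d, 1 := Finset.sum_le_sum fun j _ => hB i j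
      _ = d := by simp
  have hD : ‖(Matrix.diagonal (RCLike.ofReal ∘ f ∘ hA.eigenvalues) :
      Matrix (Fin d) (Fin d) ℂ)‖₊ ≤ c := by
    rw [Matrix.linfty_opNNNorm_diagonal, Pi.nnnorm_def]
    apply Finset.sup_le
    intro i _
    simpa using h _ (hA.eigenvalues_mem_spectrum_real i)
  calc ‖U * Matrix.diagonal (RCLike.ofReal ∘ f ∘ hA.eigenvalues) * star U‖₊
      ≤ ‖U * Matrix.diagonal (RCLike.ofReal ∘ f ∘ hA.eigenvalues)‖₊ * ‖star U‖₊ :=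
        Matrix.linfty_opNNNorm_mul _ _
    _ ≤ (‖U‖₊ * ‖(Matrix.diagonal (RCLike.ofReal ∘ f ∘ hA.eigenvalues) :
          Matrix (Fin d) (Fin d) ℂ)‖₊) * ‖star U‖₊ :=
        mul_le_mul' (Matrix.linfty_opNNNorm_mul _ _) le_rfl
    _ ≤ ((d : ℝ≥0) * c) * d :=
        mul_le_mul' (mul_le_mul' (hUnorm _ hU) hD)
          (hUnorm _ fun i j => by simpa [Matrix.star_apply] using hU j i)

lemma log_approx {t : ℝ} (h : |t - 1| ≤ 1/2) : |Real.log t - (t - 1)| ≤ 2 * (t - 1)^2 := by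
  have h1 : |1 - t| ≤ 1/2 := by rwa [abs_sub_comm]
  have h2 : |1 - t| < 1 := lt_of_le_of_lt h1 (by norm_num)
  have key := Real.abs_log_sub_add_sum_range_le h2 1
  norm_num at key
  rw [show Real.log t - (t - 1) = 1 - t + Real.log t by ring]
  refine key.trans ?_
  have h3 : (1:ℝ)/2 ≤ 1 - |1 - t| := by linarith
  calc (1 - t) ^ 2 / (1 - |1 - t|) ≤ (1 - t) ^ 2 / (1/2) := by gcongr
    _ = 2 * (t - 1)^2 := by ring


lemma cfcLog_sub {A : Matrix (Fin d) (Fin d) ℂ} (hA : A.IsHermitian)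
    (hpos : ∀ x ∈ spectrum ℝ A, 0 < x) :
    A.cfcLog - (A - 1) = cfc (fun t : ℝ => Real.log t - (t - 1)) A := by
  have hc : ContinuousOn Real.log (spectrum ℝ A) :=
    Real.continuousOn_log.mono (by intro x hx; simpa using (hpos x hx).ne')
  rw [cfc_sub Real.log (fun t : ℝ => t - 1) A hc (by fun_prop)]
  rw [cfc_sub (fun t : ℝ => t) (fun _ => 1) A (by fun_prop) (by fun_prop)]
  have h1 := cfc_id' ℝ A (hA : IsSelfAdjoint A)
  have h2 := cfc_const_one ℝ A (hA : IsSelfAdjoint A)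
  rw [h1, h2]
  rfl

open scoped NNReal in
lemma norm_cfc_le {A : Matrix (Fin d) (Fin d) ℂ} (hA : A.IsHermitian) (f : ℝ → ℝ) {c : ℝ}
    (hc : 0 ≤ c) (h : ∀ x ∈ spectrum ℝ A, |f x| ≤ c) :
    ‖cfc f A‖ ≤ (d : ℝ) * c * d := by
  have h1 := nnnorm_cfc_le hA f c.toNNReal (by
    intro x hx
    rw [← NNReal.coe_le_coe, coe_nnnorm, Real.coe_toNNReal _ hc]
    exact h x hx)
  rw [← NNReal.coe_le_coe] at h1
  push_cast at h1
  rwa [Real.coe_toNNReal _ hc] at h1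


theorem main {n : ℕ} (hd : 0 < d) (hn : 0 < n)
    (a : Fin n → Matrix (Fin d) (Fin d) ℂ) (ha : ∀ k, (a k).PosDef) :
    Filter.Tendsto (fun p : ℝ => Matrix.trace (powerMean a p)) Filter.atTop
      (nhds (Matrix.trace (exp ((n : ℝ)⁻¹ • ∑ k : Fin n, (a k).cfcLog)))) := by
  classical
  set L : Fin n → Matrix (Fin d) (Fin d) ℂ := fun k => (a k).cfcLog with hL
  have hLk : ∀ k, (L k).IsHermitian := fun k =>
    (cfc_predicate Real.log (a k) : IsSelfAdjoint _)
  set Lbar : Matrix (Fin d) (Fin d) ℂ := (n : ℝ)⁻¹ • ∑ k, L k with hLbar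
  set G : ℝ → Matrix (Fin d) (Fin d) ℂ := fun ε => (n : ℝ)⁻¹ • ∑ k, exp (ε • L k) with hG
  have hGherm : ∀ ε, (G ε).IsHermitian := by
    intro ε
    have h1 : ∀ k : Fin n, (exp (ε • L k))ᴴ = exp (ε • L k) := by
      intro k
      have h2 : (ε • L k).IsHermitian := (IsSelfAdjoint.all ε).smul (hLk k : IsSelfAdjoint _)
      rw [← Matrix.exp_conjTranspose, h2.eq]
    have h3 : (∑ k, exp (ε • L k)).IsHermitian := by
      have : (∑ k, exp (ε • L k))ᴴ = ∑ k, exp (ε • L k) := by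
        rw [Matrix.conjTranspose_sum]
        exact Finset.sum_congr rfl fun k _ => h1 k
      exact this
    exact ((IsSelfAdjoint.all ((n:ℝ)⁻¹)).smul (h3 : IsSelfAdjoint _) : IsSelfAdjoint _)
  have hG0 : G 0 = 1 := by
    have : ∀ k : Fin n, exp ((0:ℝ) • L k) = (1 : Matrix (Fin d) (Fin d) ℂ) := by
      intro k; rw [zero_smul, exp_zero]
    simp only [hG, this, Finset.sum_const, Finset.card_univ, Fintype.card_fin]
    rw [← Nat.cast_smul_eq_nsmul ℝ, smul_smul, inv_mul_cancel₀ (by exact_mod_cast hn.ne' : (n:ℝ) ≠ 0), one_smul]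
  have hderiv : HasDerivAt G Lbar 0 := by
    have h1 : ∀ k ∈ Finset.univ, HasDerivAt (fun ε : ℝ => exp (ε • L k)) (L k) (0:ℝ) := by
      intro k _
      have h2 := hasDerivAt_exp_smul_const (𝕂 := ℝ) (L k) (0 : ℝ)
      rw [zero_smul, exp_zero, one_mul] at h2
      exact h2
    have h2 := HasDerivAt.sum h1
    have h3 := h2.const_smul ((n:ℝ)⁻¹)
    have e : G = (n:ℝ)⁻¹ • ∑ i, fun ε : ℝ => exp (ε • L i) := by
      funext ε; simp [hG, Finset.sum_apply]
    rw [e]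
    exact h3
  have hslope : Tendsto (fun p : ℝ => p • (G p⁻¹ - 1)) atTop (nhds Lbar) := by
    have h4 := hasDerivAt_iff_tendsto_slope.mp hderiv
    have h5 : Tendsto (fun p : ℝ => p⁻¹) atTop (nhdsWithin (0:ℝ) {(0:ℝ)}ᶜ) := by
      apply tendsto_nhdsWithin_of_tendsto_nhds_of_eventually_within _ tendsto_inv_atTop_zero
      filter_upwards [eventually_gt_atTop (0:ℝ)] with p hp
      exact inv_ne_zero hp.ne'
    have h6 := h4.comp h5
    apply h6.congr'
    filter_upwards [eventually_gt_atTop (0:ℝ)] with p hp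
    show slope G 0 p⁻¹ = p • (G p⁻¹ - 1)
    rw [slope_def_module]
    simp [hG0, inv_inv]
  set C : ℝ := ‖Lbar‖ + 1 with hC
  have hCpos : 0 < C := by positivity
  have hnorm_bound : ∀ᶠ p in atTop, ‖p • (G p⁻¹ - 1)‖ ≤ C := by
    exact hslope.norm.eventually_le_const (by rw [hC]; linarith)
  have hbound : ∀ᶠ p in atTop, ‖G p⁻¹ - 1‖ ≤ C / p := by
    filter_upwards [hnorm_bound, eventually_gt_atTop (0:ℝ)] with p h1 h2
    rw [norm_smul, Real.norm_eq_abs, abs_of_pos h2] at h1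
    rw [le_div_iff₀ h2]
    linarith [mul_comm p ‖G p⁻¹ - 1‖]
  have hsmall : ∀ᶠ p in atTop, ‖G p⁻¹ - 1‖ ≤ 1/2 := by
    filter_upwards [hbound, eventually_ge_atTop (2*C)] with p h1 h2
    have h3 : (0:ℝ) < p := lt_of_lt_of_le (by positivity) h2
    have h4 : C / p ≤ 1/2 := by rw [div_le_iff₀ h3]; nlinarith
    linarith
  have hspec : ∀ᶠ p in atTop, ∀ x ∈ spectrum ℝ (G p⁻¹), |x - 1| ≤ 1/2 := by
    filter_upwards [hsmall] with p h1
    intro x hx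
    exact (spectrum_sub_one_bound hd hx).trans h1
  have hposG : ∀ᶠ p in atTop, ∀ x ∈ spectrum ℝ (G p⁻¹), 0 < x := by
    filter_upwards [hspec] with p h1 x hx
    have h2 := abs_le.mp (h1 x hx)
    linarith [h2.1]
  have hdiff : Tendsto (fun p : ℝ => p • ((G p⁻¹).cfcLog - (G p⁻¹ - 1))) atTop (nhds 0) := by
    apply squeeze_zero_norm' (a := fun p => (2 * C^2 * d * d) * p⁻¹)
    · filter_upwards [hbound, hspec, hposG, eventually_gt_atTop (0:ℝ)] with p h1 h2 h3 hp
      have e1 : (G p⁻¹).cfcLog - (G p⁻¹ - 1) = cfc (fun t : ℝ => Real.log t - (t - 1)) (G p⁻¹) :=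
        cfcLog_sub (hGherm _) h3
      rw [e1, norm_smul, Real.norm_eq_abs, abs_of_pos hp]
      have h5 : ‖cfc (fun t : ℝ => Real.log t - (t - 1)) (G p⁻¹)‖ ≤ (d:ℝ) * (2 * (C/p)^2) * d := by
        have h6 : ∀ x ∈ spectrum ℝ (G p⁻¹), |Real.log x - (x - 1)| ≤ 2 * (C/p)^2 := by
          intro x hx
          refine (log_approx (h2 x hx)).trans ?_
          have h7 : |x - 1| ≤ C / p := (spectrum_sub_one_bound hd hx).trans h1
          have h8 : (x-1)^2 ≤ (C/p)^2 := by
            rw [← sq_abs]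
            exact pow_le_pow_left₀ (abs_nonneg _) h7 2
          nlinarith
        exact norm_cfc_le (hGherm _) _ (by positivity) h6
      calc p * ‖cfc (fun t : ℝ => Real.log t - (t - 1)) (G p⁻¹)‖
          ≤ p * ((d:ℝ) * (2 * (C/p)^2) * d) := mul_le_mul_of_nonneg_left h5 hp.le
        _ = (2 * C^2 * d * d) * p⁻¹ := by field_simp
    · have h10 := (tendsto_inv_atTop_zero (𝕜 := ℝ)).const_mul (2 * C^2 * (d:ℝ) * d)
      simpa using h10
  have hkey : Tendsto (fun p : ℝ => p • (G p⁻¹).cfcLog) atTop (nhds Lbar) := by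
    have h9 := hdiff.add hslope
    rw [zero_add] at h9
    refine h9.congr fun p => ?_
    rw [← smul_add]
    congr 1
    abel
  have hexp : Tendsto (fun p : ℝ => exp (p • (G p⁻¹).cfcLog)) atTop (nhds (exp Lbar)) :=
    (exp_continuous.tendsto _).comp hkey
  have htrcont : Continuous (Matrix.trace : Matrix (Fin d) (Fin d) ℂ → ℂ) :=
    LinearMap.continuous_of_finiteDimensional (Matrix.traceLinearMap (Fin d) ℂ ℂ)
  have htr := (htrcont.tendsto _).comp hexp
  refine Filter.Tendsto.congr' ?_ htr
  filter_upwards [hspec, hposG, eventually_gt_atTop (0:ℝ)] with p h2 h3 hp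
  show Matrix.trace (exp (p • (G p⁻¹).cfcLog)) = Matrix.trace (powerMean a p)
  congr 1
  rw [powerMean]
  have hinner : ∀ k : Fin n, (a k).cfcRpow p⁻¹ = exp (p⁻¹ • L k) := by
    intro k
    apply cfcRpow_eq_exp_smul_log (ha k).1
    intro x hx
    rw [Matrix.IsHermitian.spectrum_real_eq_range_eigenvalues (ha k).1] at hx
    obtain ⟨i, rfl⟩ := hx
    exact (ha k).eigenvalues_pos i
  have hGform : (n : ℝ)⁻¹ • ∑ k : Fin n, (a k).cfcRpow p⁻¹ = G p⁻¹ := by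
    rw [hG]
    congr 1
    exact Finset.sum_congr rfl fun k _ => hinner k
  rw [hGform]
  exact (cfcRpow_eq_exp_smul_log (hGherm _) h3 p).symm

end TG

/-- **Formula for the tracial geometric mean (Theorem 3.3).**
Let `d, n > 0` and let `a_1, …, a_n` be positive definite `d × d` complex matrices.  Then
`lim_{p→∞} Tr((1/n) ∑_{k=1}^n a_k^{1/p})^p = Tr exp((1/n) ∑_{k=1}^n log a_k)`,
i.e. the tracial geometric mean of positive definite matrices is
`TG(a_1,…,a_n) = Tr exp((1/n) ∑_{k=1}^n log a_k)`,
where `exp` is the matrix exponential and `log` is given by the continuous functional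
calculus. -/
theorem tracialGeometricMean_eq_trace_exp_log
    {d n : ℕ} (hd : 0 < d) (hn : 0 < n)
    (a : Fin n → Matrix (Fin d) (Fin d) ℂ) (ha : ∀ k, (a k).PosDef) :
    Filter.Tendsto (fun p : ℝ => Matrix.trace (powerMean a p)) Filter.atTop
      (nhds (Matrix.trace (NormedSpace.exp ((n : ℝ)⁻¹ • ∑ k : Fin n, (a k).cfcLog)))) := by
  exact TG.main hd hn a ha
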